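/- Over the alphabet {0,1,2} ordered by 1 < 2 < 0, for every even k ≥ 2 the word (102)^{k/2} 2 (102)^{k/2} 0 is Lyndon, and for every odd k ≥ 1 the word (102)^{(k+1)/2} 0 (102)^{(k-1)/2} 2 is Lyndon. -/
import Mathlib


/-- A nonempty word is Lyndon w.r.t. a strict order `r` on letters if it is
lexicographically strictly smaller than all of its proper nonempty suffixes. -/
def IsLyndonRel {α : Type*} (r : α → α → Prop) (w : List α) : Prop :=
  w ≠ [] ∧ ∀ s : List α, s <:+ w → s ≠ [] → s ≠ w → List.Lex r w s

/-- The order `1 < 2 < 0` on the alphabet `{0,1,2}`. -/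
def rel3 (a b : ℕ) : Prop :=
  (a = 1 ∧ b = 2) ∨ (a = 1 ∧ b = 0) ∨ (a = 2 ∧ b = 0)

/-- `(102)^m`: `m` consecutive copies of the block `102`. -/
def pow102 (m : ℕ) : List ℕ := (List.replicate m [1, 0, 2]).flatten

lemma pow102_succ (n : ℕ) : pow102 (n + 1) = 1 :: 0 :: 2 :: pow102 n := by
  simp [pow102, List.replicate_succ]

lemma pow102_add (a b : ℕ) : pow102 (a + b) = pow102 a ++ pow102 b := by
  rw [pow102, pow102, pow102, List.replicate_add, List.flatten_append]

lemma lex_append_left {α : Type*} {r : α → α → Prop} (a : List α) {x y : List α}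
    (h : List.Lex r x y) : List.Lex r (a ++ x) (a ++ y) := by
  induction a with
  | nil => exact h
  | cons c a ih => exact List.Lex.cons ih

lemma lex_lt_of_lt (m j : ℕ) (h : j < m) (u v : List ℕ) (c : ℕ) (hc : rel3 1 c) :
    List.Lex rel3 (pow102 m ++ u) (pow102 j ++ c :: v) := by
  have hm : m = j + ((m - j - 1) + 1) := by omega
  rw [hm, pow102_add, pow102_succ, List.append_assoc]
  exact lex_append_left _ (List.Lex.rel hc)

lemma suffix_pow102 (m : ℕ) (t s : List ℕ) (h : s <:+ pow102 m ++ t) :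
    s <:+ t ∨ (∃ j < m, s = 0 :: 2 :: (pow102 j ++ t)) ∨
      (∃ j < m, s = 2 :: (pow102 j ++ t)) ∨ (∃ j ≤ m, s = pow102 j ++ t) := by
  induction m with
  | zero => left; simpa [pow102] using h
  | succ m ih =>
    rw [pow102_succ] at h
    simp only [List.cons_append, List.suffix_cons_iff] at h
    rcases h with h | h | h | h
    · right; right; right
      exact ⟨m + 1, le_refl _, by rw [pow102_succ]; simpa using h⟩
    · right; left; exact ⟨m, Nat.lt_succ_self m, h⟩
    · right; right; left; exact ⟨m, Nat.lt_succ_self m, h⟩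
    · rcases ih h with h | ⟨j, hj, h⟩ | ⟨j, hj, h⟩ | ⟨j, hj, h⟩
      · left; exact h
      · right; left; exact ⟨j, by omega, h⟩
      · right; right; left; exact ⟨j, by omega, h⟩
      · right; right; right; exact ⟨j, by omega, h⟩

lemma r12 : rel3 1 2 := Or.inl ⟨rfl, rfl⟩
lemma r10 : rel3 1 0 := Or.inr (Or.inl ⟨rfl, rfl⟩)
lemma r20 : rel3 2 0 := Or.inr (Or.inr ⟨rfl, rfl⟩)

lemma head1 (m : ℕ) (hm : 1 ≤ m) (t : List ℕ) :
    ∃ rest, pow102 m ++ t = 1 :: rest := by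
  obtain ⟨n, rfl⟩ : ∃ n, m = n + 1 := ⟨m - 1, by omega⟩
  rw [pow102_succ]; exact ⟨_, rfl⟩

lemma evenLyndon (m : ℕ) (hm : 1 ≤ m) :
    IsLyndonRel rel3 (pow102 m ++ (2 :: (pow102 m ++ [0]))) := by
  obtain ⟨rest, hw⟩ := head1 m hm (2 :: (pow102 m ++ [0]))
  refine ⟨by rw [hw]; simp, ?_⟩
  intro s hs hne hne'
  have lexhead : ∀ c v, rel3 1 c → List.Lex rel3 (pow102 m ++ (2 :: (pow102 m ++ [0]))) (c :: v) := by
    intro c v hc; rw [hw]; exact List.Lex.rel hc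
  rcases suffix_pow102 m _ s hs with h | ⟨j, hj, h⟩ | ⟨j, hj, h⟩ | ⟨j, hj, h⟩
  · -- suffix of 2 :: (pow102 m ++ [0])
    rw [List.suffix_cons_iff] at h
    rcases h with h | h
    · exact h ▸ lexhead 2 _ r12
    · rcases suffix_pow102 m _ s h with h | ⟨j, hj, h⟩ | ⟨j, hj, h⟩ | ⟨j, hj, h⟩
      · -- suffix of [0]
        rcases List.suffix_cons_iff.mp h with h | h
        · exact h ▸ lexhead 0 _ r10
        · exact absurd (List.suffix_nil.mp h) hne
      · exact h ▸ lexhead 0 _ r10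
      · exact h ▸ lexhead 2 _ r12
      · -- s = pow102 j ++ [0], j ≤ m
        subst h
        rcases Nat.lt_or_ge j m with hlt | hge
        · exact lex_lt_of_lt m j hlt _ _ 0 r10
        · have : j = m := by omega
          subst this
          exact lex_append_left (pow102 j) (List.Lex.rel r20)
  · exact h ▸ lexhead 0 _ r10
  · exact h ▸ lexhead 2 _ r12
  · -- s = pow102 j ++ (2 :: ...), j ≤ m
    subst h
    rcases Nat.lt_or_ge j m with hlt | hge
    · exact lex_lt_of_lt m j hlt _ _ 2 r12
    · have : j = m := by omega
      subst this
      exact absurd rfl hne'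

lemma oddLyndon (b : ℕ) :
    IsLyndonRel rel3 (pow102 (b + 1) ++ (0 :: (pow102 b ++ [2]))) := by
  obtain ⟨rest, hw⟩ := head1 (b + 1) (by omega) (0 :: (pow102 b ++ [2]))
  refine ⟨by rw [hw]; simp, ?_⟩
  intro s hs hne hne'
  have lexhead : ∀ c v, rel3 1 c →
      List.Lex rel3 (pow102 (b + 1) ++ (0 :: (pow102 b ++ [2]))) (c :: v) := by
    intro c v hc; rw [hw]; exact List.Lex.rel hc
  rcases suffix_pow102 (b + 1) _ s hs with h | ⟨j, hj, h⟩ | ⟨j, hj, h⟩ | ⟨j, hj, h⟩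
  · rw [List.suffix_cons_iff] at h
    rcases h with h | h
    · exact h ▸ lexhead 0 _ r10
    · rcases suffix_pow102 b _ s h with h | ⟨j, hj, h⟩ | ⟨j, hj, h⟩ | ⟨j, hj, h⟩
      · rcases List.suffix_cons_iff.mp h with h | h
        · exact h ▸ lexhead 2 _ r12
        · exact absurd (List.suffix_nil.mp h) hne
      · exact h ▸ lexhead 0 _ r10
      · exact h ▸ lexhead 2 _ r12
      · -- s = pow102 j ++ [2], j ≤ b < b+1
        subst h
        exact lex_lt_of_lt (b + 1) j (by omega) _ _ 2 r12
  · exact h ▸ lexhead 0 _ r10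
  · exact h ▸ lexhead 2 _ r12
  · subst h
    rcases Nat.lt_or_ge j (b + 1) with hlt | hge
    · exact lex_lt_of_lt (b + 1) j hlt _ _ 0 r10
    · have : j = b + 1 := by omega
      subst this
      exact absurd rfl hne'

/-- Over `{0,1,2}` with `1 < 2 < 0`: for every even `k ≥ 2` the word
`(102)^{k/2} 2 (102)^{k/2} 0` is Lyndon, and for every odd `k ≥ 1` the word
`(102)^{(k+1)/2} 0 (102)^{(k-1)/2} 2` is Lyndon. -/
theorem isLyndon_pow102_words (k : ℕ) (hk : 1 ≤ k) :
    (2 ∣ k → IsLyndonRel rel3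
      (pow102 (k / 2) ++ [2] ++ pow102 (k / 2) ++ [0])) ∧
    (¬ 2 ∣ k → IsLyndonRel rel3
      (pow102 ((k + 1) / 2) ++ [0] ++ pow102 ((k - 1) / 2) ++ [2])) := by
  constructor
  · intro hdvd
    have hm : 1 ≤ k / 2 := by omega
    have := evenLyndon (k / 2) hm
    simpa [List.append_assoc] using this
  · intro hdvd
    have h1 : (k + 1) / 2 = (k - 1) / 2 + 1 := by omega
    have := oddLyndon ((k - 1) / 2)
    rw [h1]
    simpa [List.append_assoc] using this
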